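/- (Lyapunov decrease of the optimal value along the closed loop.) Under Condition 1 and Assumption SA1, let α ∈ (0,1) satisfy αP̄ ⪯ Q_i for all i ∈ 𝕄 and α₀ > 0 satisfy α₀(P̄ − P̲) ⪯ Q_i for all i ∈ 𝕄. Then for every integer d > 1, every x ∈ ℝⁿ, and every υ ∈ F_d(x), V*(υ) ≤ (1 − α + (1−α)^{d−1}/α₀)·V*(x), where V* is real-valued (finite) by SA1. -/

import Mathlib

open Matrix Filter
open scoped ENNReal

/-- Data of a switched linear-quadratic problem with `M` modes,
state dimension `n` and continuous-input dimension `m`. -/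
structure SwitchedLQR (n m M : ℕ) where
  A : Fin M → Matrix (Fin n) (Fin n) ℝ
  B : Fin M → Matrix (Fin n) (Fin m) ℝ
  Q : Fin M → Matrix (Fin n) (Fin n) ℝ
  R : Fin M → Matrix (Fin m) (Fin m) ℝ

namespace SwitchedLQR

variable {n m M : ℕ}

/-- Stage cost `ℓ(x,u,i) = xᵀQᵢx + uᵀRᵢu`. -/
def ell (S : SwitchedLQR n m M) (x : Fin n → ℝ) (u : Fin m → ℝ) (i : Fin M) : ℝ :=
  x ⬝ᵥ ((S.Q i) *ᵥ x) + u ⬝ᵥ ((S.R i) *ᵥ u)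

/-- Riccati operator `𝓡ᵢ(P)`. -/
noncomputable def Ric (S : SwitchedLQR n m M) (i : Fin M)
    (P : Matrix (Fin n) (Fin n) ℝ) : Matrix (Fin n) (Fin n) ℝ :=
  S.Q i + (S.A i)ᵀ * P * S.A i -
    (S.A i)ᵀ * P * S.B i * (S.R i + (S.B i)ᵀ * P * S.B i)⁻¹ * ((S.B i)ᵀ * P * S.A i)

/-- `P_𝐢 = 𝓡_{i₀}(𝓡_{i₁}(⋯𝓡_{i_{d-1}}(P̲)⋯))` for a finite mode sequence `𝐢`. -/
noncomputable def Pseq (S : SwitchedLQR n m M) (Pund : Matrix (Fin n) (Fin n) ℝ)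
    (l : List (Fin M)) : Matrix (Fin n) (Fin n) ℝ :=
  l.foldr S.Ric Pund

/-- Solution `φ(k,x,u,i)` of the switched linear system. -/
def phi (S : SwitchedLQR n m M) (x : Fin n → ℝ) (u : ℕ → Fin m → ℝ) (is : ℕ → Fin M) :
    ℕ → Fin n → ℝ
  | 0 => x
  | k + 1 => S.A (is k) *ᵥ (phi S x u is k) + S.B (is k) *ᵥ (u k)

/-- Finite-horizon cost `J_d` with terminal cost matrix `P̲`. -/
noncomputable def Jd (S : SwitchedLQR n m M) (Pund : Matrix (Fin n) (Fin n) ℝ) (d : ℕ)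
    (x : Fin n → ℝ) (u : ℕ → Fin m → ℝ) (is : ℕ → Fin M) : ℝ :=
  (∑ k ∈ Finset.range d, S.ell (S.phi x u is k) (u k) (is k)) +
    (S.phi x u is d) ⬝ᵥ (Pund *ᵥ (S.phi x u is d))

/-- Infinite-horizon cost `J(x,u,i) ∈ [0,∞]`. -/
noncomputable def Jinf (S : SwitchedLQR n m M) (x : Fin n → ℝ) (u : ℕ → Fin m → ℝ)
    (is : ℕ → Fin M) : ℝ≥0∞ :=
  ∑' k : ℕ, ENNReal.ofReal (S.ell (S.phi x u is k) (u k) (is k))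

/-- Optimal value function `V*(x)`. -/
noncomputable def Vstar (S : SwitchedLQR n m M) (x : Fin n → ℝ) : ℝ≥0∞ :=
  ⨅ (u : ℕ → Fin m → ℝ) (is : ℕ → Fin M), S.Jinf x u is

/-- `V*_d(x)`: minimum over length-`d` mode sequences `𝐢` of `xᵀP_𝐢x`. -/
noncomputable def Vd (S : SwitchedLQR n m M) (Pund : Matrix (Fin n) (Fin n) ℝ) (d : ℕ)
    (x : Fin n → ℝ) : ℝ :=
  sInf {r : ℝ | ∃ l : List (Fin M), l.length = d ∧ r = x ⬝ᵥ ((S.Pseq Pund l) *ᵥ x)}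

/-- Condition 1: the LMI block matrix is positive semi-definite for every mode. -/
def Cond1 (S : SwitchedLQR n m M) (Pund : Matrix (Fin n) (Fin n) ℝ) : Prop :=
  ∀ i : Fin M,
    (Matrix.fromBlocks
      ((S.A i)ᵀ * Pund * S.A i - Pund + S.Q i) ((S.A i)ᵀ * Pund * S.B i)
      ((S.B i)ᵀ * Pund * S.A i) (S.R i + (S.B i)ᵀ * Pund * S.B i)).PosSemidef

/-- Assumption SA1. -/
def SA1 (S : SwitchedLQR n m M) (Pbar : Matrix (Fin n) (Fin n) ℝ) : Prop :=
  Pbar.PosDef ∧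
    ∀ x : Fin n → ℝ, ∃ (u : ℕ → Fin m → ℝ) (is : ℕ → Fin M),
      S.Jinf x u is = S.Vstar x ∧ S.Vstar x ≤ ENNReal.ofReal (x ⬝ᵥ (Pbar *ᵥ x))

/-- `H*_d(x)`. -/
noncomputable def HStar (S : SwitchedLQR n m M) (Pund : Matrix (Fin n) (Fin n) ℝ) (d : ℕ)
    (x : Fin n → ℝ) : Set ((Fin m → ℝ) × Fin M) :=
  {p | S.Vd Pund d x =
        S.ell x p.1 p.2 + S.Vd Pund (d - 1) (S.A p.2 *ᵥ x + S.B p.2 *ᵥ p.1)}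

/-- `F_d(x)`. -/
noncomputable def Fd (S : SwitchedLQR n m M) (Pund : Matrix (Fin n) (Fin n) ℝ) (d : ℕ)
    (x : Fin n → ℝ) : Set (Fin n → ℝ) :=
  {y | ∃ p ∈ S.HStar Pund d x, y = S.A p.2 *ᵥ x + S.B p.2 *ᵥ p.1}

end SwitchedLQR

/-!
Completing the square shows that `xᵀ𝓡ᵢ(P)x` is the minimal one-step cost
`ℓ(x,u,i) + (Aᵢx + Bᵢu)ᵀP(Aᵢx + Bᵢu)`, so `V*_d` obeys the Bellman recursion
`V*_{d+1}(x) = min_{u,i} ℓ(x,u,i) + V*_d(Aᵢx + Bᵢu)` and the minimum is attained.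

Condition 1 says that `xᵀP̲x` decreases by at most the stage cost along every step, so the
finite-horizon costs `J_d` with terminal cost `P̲` increase with `d`. Along a trajectory of
finite cost the stage costs are summable; as `Qᵢ ≻ 0` the state tends to `0`, hence `J_d → J`
and `V*_d ≤ J_d ≤ J`, i.e. `V*_d ≤ V*`.

With `V* ≤ xᵀP̄x` and `αP̄ ⪯ Qᵢ` the stage cost is at least `α V*(x) ≥ α V*_d(x)`, so along an
optimal step `V*_{d-1}(υ) ≤ (1 - α) V*_d(x)`. Feeding this into `V*(x) ≤ ℓ + V*(υ)`, an induction
on the horizon, started with `α₀(P̄ - P̲) ⪯ Qᵢ`, gives `V* ≤ (1 + (1-α)^d / α₀) V*_{d+1}`.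
Applying it at `υ` with horizon `d - 1` and the contraction once more gives the theorem.
-/

open scoped Topology

namespace Matrix

variable {ι : Type*} [Fintype ι]

lemma mulVec_dotProduct {κ R : Type*} [Fintype κ] [CommSemiring R] (K : Matrix ι κ R)
    (x : κ → R) (w : ι → R) : (K *ᵥ x) ⬝ᵥ w = x ⬝ᵥ (Kᵀ *ᵥ w) := by
  rw [dotProduct_transpose_mulVec, dotProduct_comm]

def quadForm (P : Matrix ι ι ℝ) (x : ι → ℝ) : ℝ := x ⬝ᵥ (P *ᵥ x)

lemma quadForm_sub (P Q : Matrix ι ι ℝ) (x : ι → ℝ) :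
    (P - Q).quadForm x = P.quadForm x - Q.quadForm x := by
  simp [quadForm, sub_mulVec, dotProduct_sub]

lemma quadForm_smul (c : ℝ) (P : Matrix ι ι ℝ) (x : ι → ℝ) :
    (c • P).quadForm x = c * P.quadForm x := by
  simp [quadForm, smul_mulVec, dotProduct_smul]

lemma quadForm_smul_right (P : Matrix ι ι ℝ) (t : ℝ) (x : ι → ℝ) :
    P.quadForm (t • x) = t ^ 2 * P.quadForm x := by
  simp only [quadForm, mulVec_smul, dotProduct_smul, smul_dotProduct, smul_eq_mul]
  ring

lemma continuous_quadForm (P : Matrix ι ι ℝ) : Continuous P.quadForm :=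
  continuous_id.dotProduct (continuous_const.matrix_mulVec continuous_id)

lemma PosSemidef.quadForm_nonneg {P : Matrix ι ι ℝ} (hP : P.PosSemidef) (x : ι → ℝ) :
    0 ≤ P.quadForm x := by
  simpa [quadForm] using hP.dotProduct_mulVec_nonneg x

lemma PosDef.exists_pos_mul_sq_norm_le {P : Matrix ι ι ℝ} (hP : P.PosDef) :
    ∃ c > 0, ∀ x, c * ‖x‖ ^ 2 ≤ P.quadForm x := by
  cases isEmpty_or_nonempty ι
  · exact ⟨1, one_pos, fun x => by simp [Subsingleton.elim x 0, quadForm]⟩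
  obtain ⟨w, hw, hw_min⟩ := (isCompact_sphere (0 : ι → ℝ) 1).exists_isMinOn
    (NormedSpace.sphere_nonempty.2 zero_le_one) (continuous_quadForm P).continuousOn
  have hw0 : w ≠ 0 := ne_zero_of_mem_unit_sphere ⟨w, hw⟩
  refine ⟨P.quadForm w, by simpa [quadForm] using hP.dotProduct_mulVec_pos hw0, fun x => ?_⟩
  rcases eq_or_ne x 0 with rfl | hx
  · simp [quadForm]
  have hx' : 0 < ‖x‖ := norm_pos_iff.2 hx
  have h := hw_min (show ‖x‖⁻¹ • x ∈ Metric.sphere (0 : ι → ℝ) 1 by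
    simp [norm_smul, hx'.ne'])
  rwa [Set.mem_ofPred_eq, quadForm_smul_right, inv_pow, inv_mul_eq_div,
    le_div_iff₀ (by positivity)] at h

lemma tendsto_zero_of_quadForm_le {κ : Type*} [Finite κ] {Q : κ → Matrix ι ι ℝ}
    (hQ : ∀ j, (Q j).PosDef) {y : ℕ → ι → ℝ} {j : ℕ → κ} {f : ℕ → ℝ} (hf : Tendsto f atTop (𝓝 0))
    (hle : ∀ k, (Q (j k)).quadForm (y k) ≤ f k) : Tendsto y atTop (𝓝 0) := by
  choose c hc hcQ using fun j => (hQ j).exists_pos_mul_sq_norm_le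
  have : Nonempty κ := ⟨j 0⟩
  obtain ⟨j₀, hj₀⟩ := Finite.exists_min c
  have hsq : Tendsto (fun k => ‖y k‖ ^ 2) atTop (𝓝 0) := by
    refine squeeze_zero (fun k => by positivity) (fun k => ?_) (by simpa using hf.div_const (c j₀))
    rw [le_div_iff₀' (hc j₀)]
    exact (mul_le_mul_of_nonneg_right (hj₀ (j k)) (by positivity)).trans
      ((hcQ _ _).trans (hle k))
  rw [tendsto_zero_iff_norm_tendsto_zero]
  simpa [Real.sqrt_sq (norm_nonneg _)] using hsq.sqrt

end Matrix

namespace SwitchedLQR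

variable {n m M : ℕ}

section

variable (S : SwitchedLQR n m M)

lemma ell_eq (x : Fin n → ℝ) (u : Fin m → ℝ) (i : Fin M) :
    S.ell x u i = (S.Q i).quadForm x + (S.R i).quadForm u := rfl

lemma quadForm_Q_le_ell {i : Fin M} (hR : (S.R i).PosSemidef) (x : Fin n → ℝ)
    (u : Fin m → ℝ) : (S.Q i).quadForm x ≤ S.ell x u i :=
  le_add_of_nonneg_right (hR.quadForm_nonneg u)

lemma ell_nonneg {i : Fin M} (hQ : (S.Q i).PosSemidef) (hR : (S.R i).PosSemidef)
    (x : Fin n → ℝ) (u : Fin m → ℝ) : 0 ≤ S.ell x u i :=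
  add_nonneg (hQ.quadForm_nonneg x) (hR.quadForm_nonneg u)

noncomputable def feedback (i : Fin M) (P : Matrix (Fin n) (Fin n) ℝ) (x : Fin n → ℝ) :
    Fin m → ℝ :=
  -(((S.R i + (S.B i)ᵀ * P * S.B i)⁻¹ * ((S.B i)ᵀ * P * S.A i)) *ᵥ x)

lemma posDef_R_add {P : Matrix (Fin n) (Fin n) ℝ} (hP : P.PosSemidef) {i : Fin M}
    (hR : (S.R i).PosDef) : (S.R i + (S.B i)ᵀ * P * S.B i).PosDef :=
  hR.add_posSemidef (by simpa using hP.conjTranspose_mul_mul_same (S.B i))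

/-- Completion of squares: `feedback i P x` minimises the one-step cost-to-go, with minimum
`xᵀ𝓡ᵢ(P)x`. -/
theorem ell_add_quadForm_eq {P : Matrix (Fin n) (Fin n) ℝ} (hP : P.PosSemidef) {i : Fin M}
    (hR : (S.R i).PosDef) (x : Fin n → ℝ) (u : Fin m → ℝ) :
    S.ell x u i + P.quadForm (S.A i *ᵥ x + S.B i *ᵥ u) =
      (S.Ric i P).quadForm x +
        (S.R i + (S.B i)ᵀ * P * S.B i).quadForm (u - S.feedback i P x) := by
  have hG := S.posDef_R_add hP hR
  simp only [ell_eq, Ric, feedback, quadForm]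
  set G := S.R i + (S.B i)ᵀ * P * S.B i with hG_def
  have hdet : IsUnit G.det := hG.det_pos.ne'.isUnit
  have hPT : Pᵀ = P := hP.isHermitian.eq
  have hGinvT : (G⁻¹)ᵀ = G⁻¹ := by
    rw [transpose_nonsing_inv, show Gᵀ = G from hG.isHermitian.eq]
  have hGGinv : G * (G⁻¹ * ((S.B i)ᵀ * P * S.A i)) = (S.B i)ᵀ * P * S.A i := by
    rw [← Matrix.mul_assoc, mul_nonsing_inv _ hdet, Matrix.one_mul]
  simp only [sub_neg_eq_add, mulVec_add, add_mulVec, sub_mulVec, dotProduct_add, add_dotProduct,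
    dotProduct_sub, mulVec_mulVec, mulVec_dotProduct, transpose_mul, transpose_transpose,
    hPT, hGinvT, hGGinv]
  have hGinvG : G⁻¹ * G = 1 := nonsing_inv_mul _ hdet
  rw [Matrix.mul_assoc _ G⁻¹ G, hGinvG, Matrix.mul_one]
  simp only [hG_def, add_mulVec, dotProduct_add, Matrix.mul_assoc]
  ring

lemma quadForm_Ric_le {P : Matrix (Fin n) (Fin n) ℝ} (hP : P.PosSemidef) {i : Fin M}
    (hR : (S.R i).PosDef) (x : Fin n → ℝ) (u : Fin m → ℝ) :
    (S.Ric i P).quadForm x ≤ S.ell x u i + P.quadForm (S.A i *ᵥ x + S.B i *ᵥ u) := by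
  rw [S.ell_add_quadForm_eq hP hR]
  exact le_add_of_nonneg_right ((S.posDef_R_add hP hR).posSemidef.quadForm_nonneg _)

lemma quadForm_Ric_eq {P : Matrix (Fin n) (Fin n) ℝ} (hP : P.PosSemidef) {i : Fin M}
    (hR : (S.R i).PosDef) (x : Fin n → ℝ) :
    (S.Ric i P).quadForm x =
      S.ell x (S.feedback i P x) i + P.quadForm (S.A i *ᵥ x + S.B i *ᵥ S.feedback i P x) := by
  rw [S.ell_add_quadForm_eq hP hR, sub_self]
  simp [quadForm]

lemma Ric_posSemidef {P : Matrix (Fin n) (Fin n) ℝ} (hP : P.PosSemidef) {i : Fin M}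
    (hQ : (S.Q i).PosSemidef) (hR : (S.R i).PosDef) : (S.Ric i P).PosSemidef := by
  have hG := (S.posDef_R_add hP hR).isHermitian.inv
  have hK : ((S.B i)ᵀ * P * S.A i)ᴴ = (S.A i)ᵀ * P * S.B i := by
    simp [conjTranspose_eq_transpose_of_trivial, transpose_mul, show Pᵀ = P from hP.isHermitian.eq,
      Matrix.mul_assoc]
  refine PosSemidef.of_dotProduct_mulVec_nonneg ?_ fun x => ?_
  · have := (hQ.isHermitian.add (isHermitian_conjTranspose_mul_mul (S.A i) hP.isHermitian)).sub
      (isHermitian_conjTranspose_mul_mul ((S.B i)ᵀ * P * S.A i) hG)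
    rwa [hK, conjTranspose_eq_transpose_of_trivial] at this
  · have h := S.quadForm_Ric_eq hP hR x
    have := add_nonneg (S.ell_nonneg hQ hR.posSemidef x (S.feedback i P x))
      (hP.quadForm_nonneg (S.A i *ᵥ x + S.B i *ᵥ S.feedback i P x))
    rw [← h] at this
    simpa [quadForm] using this

lemma Pseq_posSemidef (hQ : ∀ i, (S.Q i).PosSemidef) (hR : ∀ i, (S.R i).PosDef)
    {Pund : Matrix (Fin n) (Fin n) ℝ} (hPund : Pund.PosSemidef) (l : List (Fin M)) :
    (S.Pseq Pund l).PosSemidef := by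
  induction l with
  | nil => exact hPund
  | cons i l ih => exact S.Ric_posSemidef ih (hQ i) (hR i)

variable (Pund : Matrix (Fin n) (Fin n) ℝ)

lemma Vd_eq_sInf (d : ℕ) (x : Fin n → ℝ) :
    S.Vd Pund d x =
      sInf {r | ∃ l : List (Fin M), l.length = d ∧ r = (S.Pseq Pund l).quadForm x} :=
  rfl

lemma finite_setOf_quadForm_Pseq (d : ℕ) (x : Fin n → ℝ) :
    {r | ∃ l : List (Fin M), l.length = d ∧ r = (S.Pseq Pund l).quadForm x}.Finite :=
  ((List.finite_length_eq (Fin M) d).image fun l => (S.Pseq Pund l).quadForm x).subset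
    fun _ ⟨l, hl, hr⟩ => ⟨l, hl, hr.symm⟩

lemma Vd_le_quadForm_Pseq {d : ℕ} {l : List (Fin M)} (hl : l.length = d) (x : Fin n → ℝ) :
    S.Vd Pund d x ≤ (S.Pseq Pund l).quadForm x :=
  csInf_le (S.finite_setOf_quadForm_Pseq Pund d x).bddBelow ⟨l, hl, rfl⟩

lemma exists_Vd_eq [Nonempty (Fin M)] (d : ℕ) (x : Fin n → ℝ) :
    ∃ l : List (Fin M), l.length = d ∧ S.Vd Pund d x = (S.Pseq Pund l).quadForm x :=
  Set.Nonempty.csInf_mem (s := {r | ∃ l : List (Fin M), l.length = d ∧ r = _})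
    ⟨_, List.replicate d (Classical.arbitrary (Fin M)), List.length_replicate, rfl⟩
    (S.finite_setOf_quadForm_Pseq Pund d x)

lemma Vd_zero (x : Fin n → ℝ) : S.Vd Pund 0 x = Pund.quadForm x := by
  have : {r | ∃ l : List (Fin M), l.length = 0 ∧ r = (S.Pseq Pund l).quadForm x} =
      {Pund.quadForm x} := by
    simp only [List.length_eq_zero_iff, exists_eq_left]
    rfl
  rw [Vd_eq_sInf, this, csInf_singleton]

variable [Nonempty (Fin M)] {Pund}

lemma Vd_succ_le (hQ : ∀ i, (S.Q i).PosSemidef) (hR : ∀ i, (S.R i).PosDef)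
    (hPund : Pund.PosSemidef) (d : ℕ) (x : Fin n → ℝ) (u : Fin m → ℝ) (i : Fin M) :
    S.Vd Pund (d + 1) x ≤ S.ell x u i + S.Vd Pund d (S.A i *ᵥ x + S.B i *ᵥ u) := by
  obtain ⟨l, hl, h⟩ := S.exists_Vd_eq Pund d (S.A i *ᵥ x + S.B i *ᵥ u)
  calc S.Vd Pund (d + 1) x ≤ (S.Ric i (S.Pseq Pund l)).quadForm x :=
        S.Vd_le_quadForm_Pseq Pund (l := i :: l) (by simp [hl]) x
    _ ≤ S.ell x u i + (S.Pseq Pund l).quadForm (S.A i *ᵥ x + S.B i *ᵥ u) :=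
        S.quadForm_Ric_le (S.Pseq_posSemidef hQ hR hPund l) (hR i) x u
    _ = S.ell x u i + S.Vd Pund d (S.A i *ᵥ x + S.B i *ᵥ u) := by rw [h]

lemma exists_Vd_succ_eq (hQ : ∀ i, (S.Q i).PosSemidef) (hR : ∀ i, (S.R i).PosDef)
    (hPund : Pund.PosSemidef) (d : ℕ) (x : Fin n → ℝ) :
    ∃ (u : Fin m → ℝ) (i : Fin M),
      S.Vd Pund (d + 1) x = S.ell x u i + S.Vd Pund d (S.A i *ᵥ x + S.B i *ᵥ u) := by
  obtain ⟨_ | ⟨i, l⟩, hl, h⟩ := S.exists_Vd_eq Pund (d + 1) x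
  · simp at hl
  set u := S.feedback i (S.Pseq Pund l) x
  refine ⟨u, i, (S.Vd_succ_le hQ hR hPund d x u i).antisymm ?_⟩
  calc S.Vd Pund (d + 1) x = S.ell x u i + (S.Pseq Pund l).quadForm (S.A i *ᵥ x + S.B i *ᵥ u) :=
        h.trans (S.quadForm_Ric_eq (S.Pseq_posSemidef hQ hR hPund l) (hR i) x)
    _ ≥ S.ell x u i + S.Vd Pund d (S.A i *ᵥ x + S.B i *ᵥ u) :=
        add_le_add_right (S.Vd_le_quadForm_Pseq Pund (by simpa using hl) _) _

end

variable {S : SwitchedLQR n m M} {Pund Pbar : Matrix (Fin n) (Fin n) ℝ}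

lemma Jd_eq (d : ℕ) (x : Fin n → ℝ) (u : ℕ → Fin m → ℝ) (is : ℕ → Fin M) :
    S.Jd Pund d x u is =
      ∑ k ∈ Finset.range d, S.ell (S.phi x u is k) (u k) (is k) +
        Pund.quadForm (S.phi x u is d) :=
  rfl

-- The quadratic form of the block matrix of Condition 1 at `(x, u)`.
lemma Cond1.quadForm_le (hC : S.Cond1 Pund) (x : Fin n → ℝ) (u : Fin m → ℝ) (i : Fin M) :
    Pund.quadForm x ≤ S.ell x u i + Pund.quadForm (S.A i *ᵥ x + S.B i *ᵥ u) := by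
  have h := (hC i).dotProduct_mulVec_nonneg (Sum.elim x u)
  rw [show star (Sum.elim x u) = Sum.elim x u from rfl, fromBlocks_mulVec,
    sumElim_dotProduct_sumElim] at h
  simp only [ell_eq, quadForm, mulVec_add, add_mulVec, sub_mulVec, dotProduct_add,
    add_dotProduct, dotProduct_sub, mulVec_mulVec, mulVec_dotProduct, Sum.elim_comp_inl,
    Sum.elim_comp_inr, Matrix.mul_assoc] at h ⊢
  linarith

lemma Cond1.monotone_Jd (hC : S.Cond1 Pund) (x : Fin n → ℝ) (u : ℕ → Fin m → ℝ)
    (is : ℕ → Fin M) : Monotone fun d => S.Jd Pund d x u is := by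
  refine monotone_nat_of_le_succ fun d => ?_
  have := hC.quadForm_le (S.phi x u is d) (u d) (is d)
  rw [Jd_eq, Jd_eq, Finset.sum_range_succ, phi]
  linarith

lemma Vd_add_le [Nonempty (Fin M)] (hQ : ∀ i, (S.Q i).PosSemidef) (hR : ∀ i, (S.R i).PosDef)
    (hPund : Pund.PosSemidef) (x : Fin n → ℝ) (u : ℕ → Fin m → ℝ) (is : ℕ → Fin M)
    (j d : ℕ) :
    S.Vd Pund (j + d) x ≤
      ∑ k ∈ Finset.range j, S.ell (S.phi x u is k) (u k) (is k) +
        S.Vd Pund d (S.phi x u is j) := by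
  induction j generalizing d with
  | zero => simp [phi]
  | succ j ih =>
    have := S.Vd_succ_le hQ hR hPund d (S.phi x u is j) (u j) (is j)
    rw [Nat.add_right_comm, Nat.add_assoc, Finset.sum_range_succ, phi]
    linarith [ih (d + 1)]

lemma Vd_le_Jd [Nonempty (Fin M)] (hQ : ∀ i, (S.Q i).PosSemidef) (hR : ∀ i, (S.R i).PosDef)
    (hPund : Pund.PosSemidef) (d : ℕ) (x : Fin n → ℝ) (u : ℕ → Fin m → ℝ) (is : ℕ → Fin M) :
    S.Vd Pund d x ≤ S.Jd Pund d x u is := by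
  simpa [Jd_eq, Vd_zero] using S.Vd_add_le hQ hR hPund x u is d 0

section

variable {x : Fin n → ℝ} {u : ℕ → Fin m → ℝ} {is : ℕ → Fin M}

lemma hasSum_ell (hQ : ∀ i, (S.Q i).PosSemidef) (hR : ∀ i, (S.R i).PosSemidef)
    (hJ : S.Jinf x u is ≠ ⊤) :
    HasSum (fun k => S.ell (S.phi x u is k) (u k) (is k)) (S.Jinf x u is).toReal := by
  rw [Jinf, ENNReal.tsum_toReal_eq fun _ => ENNReal.ofReal_ne_top]
  simpa only [ENNReal.toReal_ofReal (S.ell_nonneg (hQ _) (hR _) _ _)] using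
    ENNReal.hasSum_toReal hJ

lemma tendsto_phi_zero (hQ : ∀ i, (S.Q i).PosDef) (hR : ∀ i, (S.R i).PosSemidef)
    (hJ : S.Jinf x u is ≠ ⊤) : Tendsto (S.phi x u is) atTop (𝓝 0) :=
  tendsto_zero_of_quadForm_le hQ
    (S.hasSum_ell (fun i => (hQ i).posSemidef) hR hJ).summable.tendsto_atTop_zero
    fun _ => S.quadForm_Q_le_ell (hR _) _ _

lemma tendsto_Jd (hQ : ∀ i, (S.Q i).PosDef) (hR : ∀ i, (S.R i).PosSemidef)
    (hJ : S.Jinf x u is ≠ ⊤) :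
    Tendsto (fun d => S.Jd Pund d x u is) atTop (𝓝 (S.Jinf x u is).toReal) := by
  have := (S.hasSum_ell (fun i => (hQ i).posSemidef) hR hJ).tendsto_sum_nat.add
    (((continuous_quadForm Pund).tendsto 0).comp (S.tendsto_phi_zero hQ hR hJ))
  simpa [Jd_eq, quadForm] using this

lemma Cond1.Jd_le_toReal_Jinf (hC : S.Cond1 Pund) (hQ : ∀ i, (S.Q i).PosDef)
    (hR : ∀ i, (S.R i).PosSemidef) (hJ : S.Jinf x u is ≠ ⊤) (d : ℕ) :
    S.Jd Pund d x u is ≤ (S.Jinf x u is).toReal :=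
  (hC.monotone_Jd x u is).ge_of_tendsto (S.tendsto_Jd hQ hR hJ) d

end

lemma Cond1.ofReal_Vd_le_Vstar (hC : S.Cond1 Pund) (hQ : ∀ i, (S.Q i).PosDef)
    (hR : ∀ i, (S.R i).PosDef) (hPund : Pund.PosSemidef) (d : ℕ) (x : Fin n → ℝ) :
    ENNReal.ofReal (S.Vd Pund d x) ≤ S.Vstar x := by
  refine le_iInf₂ fun u is => ?_
  have : Nonempty (Fin M) := ⟨is 0⟩
  rcases eq_or_ne (S.Jinf x u is) ⊤ with hJ | hJ
  · simp [hJ]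
  rw [← ENNReal.ofReal_toReal hJ]
  exact ENNReal.ofReal_le_ofReal <|
    (S.Vd_le_Jd (fun i => (hQ i).posSemidef) hR hPund d x u is).trans
      (hC.Jd_le_toReal_Jinf hQ (fun i => (hR i).posSemidef) hJ d)


lemma phi_succ_eq_phi_tail (x : Fin n → ℝ) (u : ℕ → Fin m → ℝ) (is : ℕ → Fin M) (k : ℕ) :
    S.phi x u is (k + 1) =
      S.phi (S.phi x u is 1) (fun j => u (j + 1)) (fun j => is (j + 1)) k := by
  induction k with
  | zero => rfl
  | succ k ih => rw [phi, ih]; rfl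

lemma Jinf_eq_ofReal_ell_add (x : Fin n → ℝ) (u : ℕ → Fin m → ℝ) (is : ℕ → Fin M) :
    S.Jinf x u is = ENNReal.ofReal (S.ell x (u 0) (is 0)) +
      S.Jinf (S.phi x u is 1) (fun j => u (j + 1)) (fun j => is (j + 1)) := by
  rw [Jinf, tsum_eq_zero_add' ENNReal.summable, Jinf]
  congr 1
  exact tsum_congr fun k => by rw [phi_succ_eq_phi_tail]

lemma Vstar_le_ofReal_ell_add (x : Fin n → ℝ) (u : Fin m → ℝ) (i : Fin M) :
    S.Vstar x ≤ ENNReal.ofReal (S.ell x u i) + S.Vstar (S.A i *ᵥ x + S.B i *ᵥ u) := by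
  simp only [Vstar, ENNReal.add_iInf]
  refine le_iInf₂ fun u' is' => (iInf₂_le (fun | 0 => u | k + 1 => u' k)
    (fun | 0 => i | k + 1 => is' k)).trans_eq ?_
  rw [Jinf_eq_ofReal_ell_add]
  rfl

lemma SA1.Vstar_ne_top (hSA : S.SA1 Pbar) (x : Fin n → ℝ) : S.Vstar x ≠ ⊤ :=
  have ⟨_, _, _, h⟩ := hSA.2 x
  ne_top_of_le_ne_top ENNReal.ofReal_ne_top h

lemma SA1.toReal_Vstar_le (hSA : S.SA1 Pbar) (x : Fin n → ℝ) :
    (S.Vstar x).toReal ≤ Pbar.quadForm x :=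
  have ⟨_, _, _, h⟩ := hSA.2 x
  ENNReal.toReal_le_of_le_ofReal (hSA.1.posSemidef.quadForm_nonneg x) h

lemma SA1.toReal_Vstar_le_ell_add (hSA : S.SA1 Pbar) (hQ : ∀ i, (S.Q i).PosSemidef)
    (hR : ∀ i, (S.R i).PosSemidef) (x : Fin n → ℝ) (u : Fin m → ℝ) (i : Fin M) :
    (S.Vstar x).toReal ≤ S.ell x u i + (S.Vstar (S.A i *ᵥ x + S.B i *ᵥ u)).toReal := by
  have hne := hSA.Vstar_ne_top (S.A i *ᵥ x + S.B i *ᵥ u)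
  have := ENNReal.toReal_mono (ENNReal.add_ne_top.2 ⟨ENNReal.ofReal_ne_top, hne⟩)
    (S.Vstar_le_ofReal_ell_add x u i)
  rwa [ENNReal.toReal_add ENNReal.ofReal_ne_top hne,
    ENNReal.toReal_ofReal (S.ell_nonneg (hQ i) (hR i) x u)] at this

lemma SA1.Vd_le_toReal_Vstar (hSA : S.SA1 Pbar) (hC : S.Cond1 Pund) (hQ : ∀ i, (S.Q i).PosDef)
    (hR : ∀ i, (S.R i).PosDef) (hPund : Pund.PosSemidef) (d : ℕ) (x : Fin n → ℝ) :
    S.Vd Pund d x ≤ (S.Vstar x).toReal :=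
  (ENNReal.ofReal_le_iff_le_toReal (hSA.Vstar_ne_top x)).1 (hC.ofReal_Vd_le_Vstar hQ hR hPund d x)

lemma mul_quadForm_le_ell {P : Matrix (Fin n) (Fin n) ℝ} {c : ℝ} {i : Fin M}
    (hcQ : (S.Q i - c • P).PosSemidef) (hR : (S.R i).PosSemidef) (x : Fin n → ℝ)
    (u : Fin m → ℝ) : c * P.quadForm x ≤ S.ell x u i := by
  have := hcQ.quadForm_nonneg x
  rw [quadForm_sub, quadForm_smul] at this
  linarith [S.quadForm_Q_le_ell hR x u]

-- The stage cost dominates `α zᵀP̄z ≥ α V*(z) ≥ α V*_{d+1}(z)`.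
lemma SA1.Vd_le_one_sub_mul_Vd (hSA : S.SA1 Pbar) (hC : S.Cond1 Pund)
    (hQ : ∀ i, (S.Q i).PosDef) (hR : ∀ i, (S.R i).PosDef) (hPund : Pund.PosSemidef) {α : ℝ}
    (hα : 0 ≤ α) (hαQ : ∀ i, (S.Q i - α • Pbar).PosSemidef) {d : ℕ} {z : Fin n → ℝ}
    {u : Fin m → ℝ} {i : Fin M}
    (hopt : S.Vd Pund (d + 1) z = S.ell z u i + S.Vd Pund d (S.A i *ᵥ z + S.B i *ᵥ u)) :
    S.Vd Pund d (S.A i *ᵥ z + S.B i *ᵥ u) ≤ (1 - α) * S.Vd Pund (d + 1) z := by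
  have hVd : S.Vd Pund (d + 1) z ≤ Pbar.quadForm z :=
    (hSA.Vd_le_toReal_Vstar hC hQ hR hPund (d + 1) z).trans (hSA.toReal_Vstar_le z)
  have := S.mul_quadForm_le_ell (hαQ i) (hR i).posSemidef z u
  nlinarith

lemma SA1.toReal_Vstar_le_Vd_one [Nonempty (Fin M)] (hSA : S.SA1 Pbar) (hC : S.Cond1 Pund)
    (hQ : ∀ i, (S.Q i).PosSemidef) (hR : ∀ i, (S.R i).PosDef) (hPund : Pund.PosSemidef)
    {α₀ : ℝ} (hα₀ : 0 < α₀) (hα₀Q : ∀ i, (S.Q i - α₀ • (Pbar - Pund)).PosSemidef)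
    (z : Fin n → ℝ) :
    (S.Vstar z).toReal ≤ S.Vd Pund 1 z + S.Vd Pund 1 z / α₀ := by
  obtain ⟨u, i, hopt⟩ := S.exists_Vd_succ_eq hQ hR hPund 0 z
  rw [Vd_zero] at hopt
  have hell : S.ell z u i ≤ S.Vd Pund 1 z := by
    rw [hopt]; exact le_add_of_nonneg_right (hPund.quadForm_nonneg _)
  have hgap : (Pbar - Pund).quadForm z ≤ S.Vd Pund 1 z / α₀ := by
    rw [le_div_iff₀' hα₀]
    exact (S.mul_quadForm_le_ell (hα₀Q i) (hR i).posSemidef z u).trans hell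
  calc (S.Vstar z).toReal ≤ Pund.quadForm z + (Pbar - Pund).quadForm z := by
        rw [quadForm_sub, add_sub_cancel]; exact hSA.toReal_Vstar_le z
    _ ≤ S.Vd Pund 1 z + S.Vd Pund 1 z / α₀ := add_le_add (hopt ▸ hC.quadForm_le z u i) hgap

theorem SA1.toReal_Vstar_le_mul_Vd [Nonempty (Fin M)] (hSA : S.SA1 Pbar) (hC : S.Cond1 Pund)
    (hQ : ∀ i, (S.Q i).PosDef) (hR : ∀ i, (S.R i).PosDef) (hPund : Pund.PosSemidef) {α : ℝ}
    (hα0 : 0 ≤ α) (hα1 : α ≤ 1) (hαQ : ∀ i, (S.Q i - α • Pbar).PosSemidef) {α₀ : ℝ}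
    (hα₀ : 0 < α₀) (hα₀Q : ∀ i, (S.Q i - α₀ • (Pbar - Pund)).PosSemidef) (d : ℕ)
    (z : Fin n → ℝ) :
    (S.Vstar z).toReal ≤ (1 + (1 - α) ^ d / α₀) * S.Vd Pund (d + 1) z := by
  have hQ' i := (hQ i).posSemidef
  induction d generalizing z with
  | zero =>
    calc (S.Vstar z).toReal ≤ S.Vd Pund 1 z + S.Vd Pund 1 z / α₀ :=
          hSA.toReal_Vstar_le_Vd_one hC hQ' hR hPund hα₀ hα₀Q z
      _ = (1 + (1 - α) ^ 0 / α₀) * S.Vd Pund (0 + 1) z := by ring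
  | succ d ih =>
    obtain ⟨u, i, hopt⟩ := S.exists_Vd_succ_eq hQ' hR hPund (d + 1) z
    set z₁ := S.A i *ᵥ z + S.B i *ᵥ u
    have hc : 0 ≤ (1 - α) ^ d / α₀ := div_nonneg (pow_nonneg (sub_nonneg.2 hα1) d) hα₀.le
    calc (S.Vstar z).toReal ≤ S.ell z u i + (S.Vstar z₁).toReal :=
          hSA.toReal_Vstar_le_ell_add hQ' (fun i => (hR i).posSemidef) z u i
      _ ≤ S.ell z u i + (1 + (1 - α) ^ d / α₀) * S.Vd Pund (d + 1) z₁ := by grw [ih z₁]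
      _ = S.Vd Pund (d + 2) z + (1 - α) ^ d / α₀ * S.Vd Pund (d + 1) z₁ := by rw [hopt]; ring
      _ ≤ S.Vd Pund (d + 2) z + (1 - α) ^ d / α₀ * ((1 - α) * S.Vd Pund (d + 2) z) := by
          grw [hSA.Vd_le_one_sub_mul_Vd hC hQ hR hPund hα0 hαQ hopt]
      _ = (1 + (1 - α) ^ (d + 1) / α₀) * S.Vd Pund (d + 1 + 1) z := by ring

end SwitchedLQR

theorem stmt14_general {n m M : ℕ}
    (S : SwitchedLQR n m M)
    (hQ : ∀ i : Fin M, (S.Q i).PosDef) (hR : ∀ i : Fin M, (S.R i).PosDef)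
    (Pund : Matrix (Fin n) (Fin n) ℝ) (hPund : Pund.PosSemidef)
    (hC : S.Cond1 Pund)
    (Pbar : Matrix (Fin n) (Fin n) ℝ) (hSA : S.SA1 Pbar)
    (α : ℝ) (hα0 : 0 < α) (hα1 : α < 1)
    (hαQ : ∀ i : Fin M, (S.Q i - α • Pbar).PosSemidef)
    (α₀ : ℝ) (hα₀ : 0 < α₀)
    (hα₀Q : ∀ i : Fin M, (S.Q i - α₀ • (Pbar - Pund)).PosSemidef)
    (d : ℕ) (hd : 1 < d) (x : Fin n → ℝ) (υ : Fin n → ℝ)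
    (hυ : υ ∈ S.Fd Pund d x) :
    S.Vstar x ≠ ⊤ ∧ S.Vstar υ ≠ ⊤ ∧
    (S.Vstar υ).toReal ≤
      (1 - α + (1 - α) ^ (d - 1) / α₀) * (S.Vstar x).toReal := by
  obtain ⟨⟨u, i⟩, hopt, rfl⟩ := hυ
  have : Nonempty (Fin M) := ⟨i⟩
  obtain ⟨d, rfl⟩ : ∃ d', d = d' + 2 := ⟨d - 2, by omega⟩
  refine ⟨hSA.Vstar_ne_top x, hSA.Vstar_ne_top _, ?_⟩
  have h1α : 0 ≤ 1 - α := sub_nonneg.2 hα1.le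
  have hc : 0 ≤ 1 + (1 - α) ^ d / α₀ := by
    have := pow_nonneg h1α d
    positivity
  calc (S.Vstar (S.A i *ᵥ x + S.B i *ᵥ u)).toReal
      ≤ (1 + (1 - α) ^ d / α₀) * S.Vd Pund (d + 1) (S.A i *ᵥ x + S.B i *ᵥ u) :=
        hSA.toReal_Vstar_le_mul_Vd hC hQ hR hPund hα0.le hα1.le hαQ hα₀ hα₀Q d _
    _ ≤ (1 + (1 - α) ^ d / α₀) * ((1 - α) * (S.Vstar x).toReal) := by
        grw [hSA.Vd_le_one_sub_mul_Vd hC hQ hR hPund hα0.le hαQ hopt,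
          hSA.Vd_le_toReal_Vstar hC hQ hR hPund]
    _ = (1 - α + (1 - α) ^ (d + 2 - 1) / α₀) * (S.Vstar x).toReal := by
        rw [show d + 2 - 1 = d + 1 from rfl, pow_succ]; ring

/-- Lyapunov decrease of the optimal value along the closed loop:
under Condition 1 and SA1, with `α,α₀` as in eq. (8), for every integer `d > 1`,
every `x` and every `υ ∈ F_d(x)`,
`V*(υ) ≤ (1 - α + (1-α)^{d-1}/α₀)·V*(x)`, where `V*` is finite by SA1. -/
theorem stmt14 {n m M : ℕ} (hn : 0 < n) (hm : 0 < m) (hM : 0 < M)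
    (S : SwitchedLQR n m M)
    (hQ : ∀ i : Fin M, (S.Q i).PosDef) (hR : ∀ i : Fin M, (S.R i).PosDef)
    (Pund : Matrix (Fin n) (Fin n) ℝ) (hPund : Pund.PosSemidef)
    (hC : S.Cond1 Pund)
    (Pbar : Matrix (Fin n) (Fin n) ℝ) (hSA : S.SA1 Pbar)
    (α : ℝ) (hα0 : 0 < α) (hα1 : α < 1)
    (hαQ : ∀ i : Fin M, (S.Q i - α • Pbar).PosSemidef)
    (α₀ : ℝ) (hα₀ : 0 < α₀)
    (hα₀Q : ∀ i : Fin M, (S.Q i - α₀ • (Pbar - Pund)).PosSemidef)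
    (d : ℕ) (hd : 1 < d) (x : Fin n → ℝ) (υ : Fin n → ℝ)
    (hυ : υ ∈ S.Fd Pund d x) :
    S.Vstar x ≠ ⊤ ∧ S.Vstar υ ≠ ⊤ ∧
    (S.Vstar υ).toReal ≤
      (1 - α + (1 - α) ^ (d - 1) / α₀) * (S.Vstar x).toReal :=
  stmt14_general S hQ hR Pund hPund hC Pbar hSA α hα0 hα1 hαQ α₀ hα₀ hα₀Q d hd x υ hυ
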